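/- arXiv:1102.2414 — 4 statements merged into one kernel-verified Lean document; each statement's English description precedes it below -/
import Mathlib

section
/- Let A, X^1, …, X^m be n×n complex matrices with 1 ≤ m ≤ n. Then the m-th derivative of the permanent at A, D^m per(A)(X^1,…,X^m) = ∂^m/∂t_1⋯∂t_m |_{t_1=⋯=t_m=0} per(A + t_1 X^1 + ⋯ + t_m X^m), equals Σ_{σ∈S_m} Σ_{J∈Q_{m,n}} per A(J; X^{σ(1)}, X^{σ(2)}, …, X^{σ(m)}). -/
open scoped Classical

noncomputable section

open scoped Matrix.Norms.L2Operator

/-- The permanent of a square complex matrix: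
`per A = Σ_σ a_{1σ(1)} ⋯ a_{nσ(n)}`. -/
def perm {k : ℕ} (A : Matrix (Fin k) (Fin k) ℂ) : ℂ :=
  ∑ σ : Equiv.Perm (Fin k), ∏ i, A i (σ i)

/-- `A(J; X¹,…,Xᵐ)` : the matrix obtained from `A` by replacing, for each `p`,
column `J p` of `A` by column `J p` of `X p`, keeping all other columns unchanged. -/
def replCols {n m : ℕ} (A : Matrix (Fin n) (Fin n) ℂ) (J : Fin m → Fin n)
    (X : Fin m → Matrix (Fin n) (Fin n) ℂ) : Matrix (Fin n) (Fin n) ℂ :=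
  Matrix.of fun i j => if h : ∃ p, J p = j then X h.choose i j else A i j

/-!
The permanent is a continuous multilinear function of the columns of a matrix, and the `m`-th
derivative of a multilinear map at `A` is the sum, over all injective placements
`e : Fin m ↪ Fin n` of the directions, of its value at `A` with column `e p` taken from `X p`.
Every embedding `Fin m ↪ Fin n` factors uniquely as `J ∘ σ` with `J` strictly increasing and
`σ` a permutation, which regroups that sum as a sum over `S_m × Q_{m,n}`.
-/

namespace ContinuousMultilinearMap

variable {𝕜 ι G H : Type*} [NontriviallyNormedField 𝕜] [Fintype ι] {E : ι → Type*}
  [∀ i, NormedAddCommGroup (E i)] [∀ i, NormedSpace 𝕜 (E i)]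
  [NormedAddCommGroup G] [NormedSpace 𝕜 G] [NormedAddCommGroup H] [NormedSpace 𝕜 H]

theorem iteratedFDeriv_apply_eq_sum_embedding (f : ContinuousMultilinearMap 𝕜 E G) (k : ℕ)
    (x : ∀ i, E i) (v : Fin k → ∀ i, E i) :
    f.iteratedFDeriv k x v =
      ∑ e : Fin k ↪ ι, f fun j => if h : ∃ p, e p = j then v h.choose j else x j := by
  simp only [ContinuousMultilinearMap.iteratedFDeriv, sum_apply, iteratedFDerivComponent_apply,
    Pi.compRightL_apply]
  refine Fintype.sum_congr _ _ fun e => congrArg f (funext fun j => ?_)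
  by_cases h : ∃ p, e p = j
  · have h' : j ∈ Set.range e := h
    rw [dif_pos h', dif_pos h, show e.toEquivRange.symm ⟨j, h'⟩ = h.choose from
      e.injective <| (congrArg Subtype.val (e.toEquivRange.apply_symm_apply ⟨j, h'⟩)).trans
        h.choose_spec.symm]
  · rw [dif_neg (show j ∉ Set.range e from h), dif_neg h]

theorem iteratedFDeriv_comp_continuousLinearMap_apply (f : ContinuousMultilinearMap 𝕜 E G)
    (L : H →L[𝕜] ∀ i, E i) (k : ℕ) (x : H) (v : Fin k → H) :
    iteratedFDeriv 𝕜 k (f ∘ L) x v =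
      ∑ e : Fin k ↪ ι, f fun j => if h : ∃ p, e p = j then L (v h.choose) j else L x j := by
  rw [L.iteratedFDeriv_comp_right f.contDiff x le_rfl, compContinuousLinearMap_apply,
    f.iteratedFDeriv_eq, iteratedFDeriv_apply_eq_sum_embedding]

end ContinuousMultilinearMap

theorem sum_embedding_eq_sum_perm_sum_strictMono {β M : Type*} [LinearOrder β] [Fintype β]
    [AddCommMonoid M] (m : ℕ) (g : (Fin m → β) → M) :
    ∑ e : Fin m ↪ β, g e =
      ∑ σ : Equiv.Perm (Fin m), ∑ J : {J : Fin m → β // StrictMono J}, g (J.1 ∘ σ) := by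
  let φ : Equiv.Perm (Fin m) × {J : Fin m → β // StrictMono J} → (Fin m ↪ β) :=
    fun x => ⟨x.2.1 ∘ x.1, x.2.2.injective.comp x.1.injective⟩
  have hφ : Function.Bijective φ := by
    constructor
    · rintro ⟨σ, J, hJ⟩ ⟨σ', J', hJ'⟩ h
      have hcomp : J ∘ σ = J' ∘ σ' := congrArg DFunLike.coe h
      obtain rfl : J = J' := (hJ.range_inj hJ').1 <| by
        rw [← EquivLike.range_comp J σ, hcomp, EquivLike.range_comp]
      obtain rfl : σ = σ' := Equiv.ext fun p => hJ.injective (congrFun hcomp p)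
      rfl
    · intro e
      have hcard : (Finset.univ.map e).card = m := by simp
      let J := (Finset.univ.map e).orderEmbOfFin hcard
      have hrange : Set.range e = Set.range J := by simp [J]
      refine ⟨((Equiv.ofInjective e e.injective).trans ((Equiv.setCongr hrange).trans
        (Equiv.ofInjective J J.injective).symm), ⟨J, J.strictMono⟩), ?_⟩
      ext p
      simp [φ, Equiv.apply_ofInjective_symm]
  rw [← Fintype.sum_prod_type']
  exact (Fintype.sum_bijective φ hφ _ _ fun _ => rfl).symm

open scoped Matrix

theorem perm_transpose {n : ℕ} (M : Matrix (Fin n) (Fin n) ℂ) : perm Mᵀ = perm M :=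
  (Matrix.permanent_transpose M).symm

def permCLM (n : ℕ) : ContinuousMultilinearMap ℂ (fun _ : Fin n => Fin n → ℂ) ℂ :=
  ∑ σ : Equiv.Perm (Fin n),
    (ContinuousMultilinearMap.mkPiAlgebra ℂ (Fin n) ℂ).compContinuousLinearMap
      fun i => ContinuousLinearMap.proj (σ i)

theorem permCLM_apply (n : ℕ) (c : Fin n → Fin n → ℂ) : permCLM n c = perm (Matrix.of c) := by
  simp [permCLM, perm]

def transposeCLM (n : ℕ) : Matrix (Fin n) (Fin n) ℂ →L[ℂ] (Fin n → Fin n → ℂ) :=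
  LinearMap.toContinuousLinearMap
    { toFun := fun M => Mᵀ
      map_add' := fun _ _ => rfl
      map_smul' := fun _ _ => rfl }

theorem transposeCLM_apply {n : ℕ} (M : Matrix (Fin n) (Fin n) ℂ) (j i : Fin n) :
    transposeCLM n M j i = M i j :=
  rfl

theorem perm_eq_permCLM_comp_transposeCLM (n : ℕ) : perm = permCLM n ∘ transposeCLM n :=
  funext fun M => by rw [Function.comp_apply, permCLM_apply]; exact (perm_transpose M).symm

theorem iteratedFDeriv_perm_eq_sum_embedding {n m : ℕ} (A : Matrix (Fin n) (Fin n) ℂ)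
    (X : Fin m → Matrix (Fin n) (Fin n) ℂ) :
    iteratedFDeriv ℂ m perm A X = ∑ e : Fin m ↪ Fin n, perm (replCols A e X) := by
  rw [perm_eq_permCLM_comp_transposeCLM,
    ContinuousMultilinearMap.iteratedFDeriv_comp_continuousLinearMap_apply]
  refine Fintype.sum_congr _ _ fun e => ?_
  rw [Function.comp_apply, permCLM_apply, permCLM_apply]
  congr 1
  ext i j
  simp only [Matrix.of_apply, transposeCLM_apply, replCols]
  -- the two sides decide `∃ p, e p = j` through different `Decidable` instances
  split_ifs <;> rfl

theorem replCols_comp_perm {n m : ℕ} (A : Matrix (Fin n) (Fin n) ℂ) {J : Fin m → Fin n}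
    (hJ : Function.Injective J) (σ : Equiv.Perm (Fin m)) (X : Fin m → Matrix (Fin n) (Fin n) ℂ) :
    replCols A (J ∘ σ) (X ∘ σ) = replCols A J X := by
  ext i j
  simp only [replCols, Matrix.of_apply, Function.comp_apply]
  by_cases h : ∃ p, J p = j
  · have hσ : ∃ p, J (σ p) = j := ⟨σ.symm h.choose, by simpa using h.choose_spec⟩
    rw [dif_pos hσ, dif_pos h, hJ (hσ.choose_spec.trans h.choose_spec.symm)]
  · have hσ : ¬∃ p, J (σ p) = j := fun ⟨p, hp⟩ => h ⟨σ p, hp⟩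
    rw [dif_neg hσ, dif_neg h]

theorem iteratedFDeriv_perm_eq_sum_replCols_general (n m : ℕ)
    (A : Matrix (Fin n) (Fin n) ℂ) (X : Fin m → Matrix (Fin n) (Fin n) ℂ) :
    iteratedFDeriv ℂ m perm A X =
      ∑ σ : Equiv.Perm (Fin m), ∑ J : {J : Fin m → Fin n // StrictMono J},
        perm (replCols A J.1 fun p => X (σ p)) := by
  rw [iteratedFDeriv_perm_eq_sum_embedding,
    sum_embedding_eq_sum_perm_sum_strictMono m fun J => perm (replCols A J X),
    ← Equiv.sum_comp (Equiv.inv (Equiv.Perm (Fin m)))]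
  refine Fintype.sum_congr _ _ fun σ => Fintype.sum_congr _ _ fun J => congrArg perm ?_
  simpa [Function.comp_def] using replCols_comp_perm A J.2.injective σ⁻¹ (X ∘ σ)

/-- for `1 ≤ m ≤ n`,
`D^m per(A)(X¹,…,Xᵐ) = Σ_{σ ∈ S_m} Σ_{J ∈ Q_{m,n}} per A(J; X^{σ(1)},…,X^{σ(m)})`,
where `Q_{m,n}` is the set of strictly increasing `m`-tuples of indices. -/
theorem iteratedFDeriv_perm_eq_sum_replCols (n m : ℕ) (hm : 1 ≤ m) (hmn : m ≤ n)
    (A : Matrix (Fin n) (Fin n) ℂ) (X : Fin m → Matrix (Fin n) (Fin n) ℂ) :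
    iteratedFDeriv ℂ m perm A X =
      ∑ σ : Equiv.Perm (Fin m), ∑ J : {J : Fin m → Fin n // StrictMono J},
        perm (replCols A J.1 fun p => X (σ p)) :=
  iteratedFDeriv_perm_eq_sum_replCols_general n m A X
end
end

section
/- Let A, X^1, …, X^m be n×n complex matrices with 1 ≤ m ≤ n. Then D^m per(A)(X^1,…,X^m) = Σ_{σ∈S_m} Σ_{I,J∈Q_{m,n}} per A(I|J) · per Y^σ_{[J]}[I|J], where Y^σ_{[J]} is the n×n matrix whose j_p-th column equals the j_p-th column of X^{σ(p)} for 1 ≤ p ≤ m and whose remaining columns are zero. -/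
open scoped Classical

noncomputable section

open scoped Matrix.Norms.L2Operator

/-- The strictly increasing enumeration of the complement of the range of an
injective tuple `I : Fin m → Fin n`; used to form `A(I|J)`, the submatrix of `A`
obtained by deleting rows `I` and columns `J`. -/
def delTuple {n m : ℕ} (I : Fin m → Fin n) (hI : Function.Injective I) : Fin (n - m) → Fin n :=
  (Finset.univ.image I)ᶜ.orderEmbOfFin
    (by simp [Finset.card_compl, Finset.card_image_of_injective _ hI])

namespace PermAux

variable {n m : ℕ}

lemma delTuple_strictMono {I : Fin m → Fin n} (hI : Function.Injective I) :
    StrictMono (delTuple I hI) :=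
  (Finset.orderEmbOfFin _ _).strictMono

lemma range_delTuple {I : Fin m → Fin n} (hI : Function.Injective I) :
    Set.range (delTuple I hI) = (Set.range I)ᶜ := by
  rw [delTuple, Finset.range_orderEmbOfFin, Finset.coe_compl, Finset.coe_image,
    Finset.coe_univ, Set.image_univ]

/-- The equivalence between `Fin m ⊕ Fin (n-m)` and `Fin n` given by an injective tuple
and the enumeration of the complement of its range. -/
def sumEquiv (hmn : m ≤ n) {I : Fin m → Fin n} (hI : Function.Injective I) :
    (Fin m ⊕ Fin (n - m)) ≃ Fin n :=
  Equiv.ofBijective (Sum.elim I (delTuple I hI)) <| by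
    refine (Fintype.bijective_iff_injective_and_card _).2 ⟨?_, by simp [Nat.add_sub_cancel' hmn]⟩
    refine Function.Injective.sumElim hI (delTuple_strictMono hI).injective fun a b h => ?_
    have hb : delTuple I hI b ∈ (Set.range I)ᶜ := by
      rw [← range_delTuple hI]; exact Set.mem_range_self b
    exact hb (h ▸ Set.mem_range_self a)

@[simp] lemma sumEquiv_inl (hmn : m ≤ n) {I : Fin m → Fin n} (hI : Function.Injective I)
    (q : Fin m) : sumEquiv hmn hI (Sum.inl q) = I q := rfl

@[simp] lemma sumEquiv_inr (hmn : m ≤ n) {I : Fin m → Fin n} (hI : Function.Injective I)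
    (r : Fin (n - m)) : sumEquiv hmn hI (Sum.inr r) = delTuple I hI r := rfl

lemma strictMono_eq_of_range_eq {I₁ I₂ : Fin m → Fin n} (h₁ : StrictMono I₁)
    (h₂ : StrictMono I₂) (h : Set.range I₁ = Set.range I₂) : I₁ = I₂ := by
  have himg : Finset.univ.image I₁ = Finset.univ.image I₂ := by
    apply Finset.coe_injective
    rw [Finset.coe_image, Finset.coe_image, Finset.coe_univ, Set.image_univ, Set.image_univ, h]
  have hc : (Finset.univ.image I₁).card = m := by
    rw [Finset.card_image_of_injective _ h₁.injective, Finset.card_univ, Fintype.card_fin]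
  have e1 : I₁ = ⇑((Finset.univ.image I₁).orderEmbOfFin hc) :=
    Finset.orderEmbOfFin_unique hc (fun x => Finset.mem_image_of_mem _ (Finset.mem_univ x)) h₁
  have e2 : I₂ = ⇑((Finset.univ.image I₁).orderEmbOfFin hc) :=
    Finset.orderEmbOfFin_unique hc
      (fun x => himg ▸ Finset.mem_image_of_mem _ (Finset.mem_univ x)) h₂
  exact e1.trans e2.symm

/-- Strictly monotone tuples correspond to finsets of the right cardinality. -/
def strictMonoEquiv (n m : ℕ) :
    {I : Fin m → Fin n // StrictMono I} ≃ {s : Finset (Fin n) // s.card = m} where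
  toFun I := ⟨Finset.univ.image I.1, by
    rw [Finset.card_image_of_injective _ I.2.injective, Finset.card_univ, Fintype.card_fin]⟩
  invFun s := ⟨s.1.orderEmbOfFin s.2, (s.1.orderEmbOfFin s.2).strictMono⟩
  left_inv I := Subtype.ext (Finset.orderEmbOfFin_unique _
    (fun x => Finset.mem_image_of_mem _ (Finset.mem_univ x)) I.2).symm
  right_inv s := Subtype.ext <| by
    apply Finset.coe_injective
    rw [Finset.coe_image, Finset.coe_univ, Set.image_univ]
    exact Finset.range_orderEmbOfFin _ _

lemma card_strictMono (n m : ℕ) :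
    Fintype.card {I : Fin m → Fin n // StrictMono I} = n.choose m := by
  rw [Fintype.card_congr (strictMonoEquiv n m), Fintype.card_finset_len, Fintype.card_fin]

end PermAux

namespace PermAux

variable {n m : ℕ}

lemma perm_submatrix (B : Matrix (Fin n) (Fin n) ℂ) {k : ℕ} (I J : Fin k → Fin n) :
    perm (B.submatrix I J) = ∑ σ : Equiv.Perm (Fin k), ∏ q, B (I q) (J (σ q)) := rfl

/-- Laplace expansion of the permanent along the columns `J`. -/
lemma perm_eq_laplace (hmn : m ≤ n) (B : Matrix (Fin n) (Fin n) ℂ)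
    {J : Fin m → Fin n} (hJ : StrictMono J) :
    perm B = ∑ I : {I : Fin m → Fin n // StrictMono I},
        perm (B.submatrix (delTuple I.1 I.2.injective) (delTuple J hJ.injective)) *
          perm (B.submatrix I.1 J) := by
  classical
  set J' := delTuple J hJ.injective with hJ'
  let Φ : ({I : Fin m → Fin n // StrictMono I} × Equiv.Perm (Fin m) × Equiv.Perm (Fin (n - m)))
      → Equiv.Perm (Fin n) := fun t =>
    (sumEquiv hmn t.1.2.injective).symm.trans ((t.2.1.sumCongr t.2.2).trans (sumEquiv hmn hJ.injective))
  have hΦl : ∀ t q, Φ t (t.1.1 q) = J (t.2.1 q) := by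
    intro t q
    have : (sumEquiv hmn t.1.2.injective).symm (t.1.1 q) = Sum.inl q := by
      rw [Equiv.symm_apply_eq]; rfl
    simp [Φ, this]
  have hΦr : ∀ t r, Φ t (delTuple t.1.1 t.1.2.injective r) = J' (t.2.2 r) := by
    intro t r
    have : (sumEquiv hmn t.1.2.injective).symm (delTuple t.1.1 t.1.2.injective r) = Sum.inr r := by
      rw [Equiv.symm_apply_eq]; rfl
    simp [Φ, this, J']
  have hrange : ∀ t x, Φ t x ∈ Set.range J ↔ x ∈ Set.range t.1.1 := by
    intro t x
    obtain ⟨s, rfl⟩ := (sumEquiv hmn t.1.2.injective).surjective x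
    cases s with
    | inl q =>
      simp only [sumEquiv_inl, hΦl]
      exact ⟨fun _ => Set.mem_range_self q, fun _ => Set.mem_range_self _⟩
    | inr r =>
      simp only [sumEquiv_inr, hΦr]
      constructor
      · intro h
        exfalso
        have : J' (t.2.2 r) ∈ (Set.range J)ᶜ := by
          rw [hJ', ← range_delTuple hJ.injective]; exact Set.mem_range_self _
        exact this h
      · intro h
        exfalso
        have : delTuple t.1.1 t.1.2.injective r ∈ (Set.range t.1.1)ᶜ := by
          rw [← range_delTuple t.1.2.injective]; exact Set.mem_range_self _
        exact this h
  have hinj : Function.Injective Φ := by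
    rintro ⟨⟨I₁, hI₁⟩, α₁, β₁⟩ ⟨⟨I₂, hI₂⟩, α₂, β₂⟩ h
    have hIr : Set.range I₁ = Set.range I₂ := by
      ext x
      rw [← hrange ⟨⟨I₁, hI₁⟩, α₁, β₁⟩ x, ← hrange ⟨⟨I₂, hI₂⟩, α₂, β₂⟩ x, h]
    have hI : I₁ = I₂ := strictMono_eq_of_range_eq hI₁ hI₂ hIr
    subst hI
    have hα : α₁ = α₂ := by
      ext q
      have h1 := hΦl ⟨⟨I₁, hI₁⟩, α₁, β₁⟩ q
      have h2 := hΦl ⟨⟨I₁, hI₂⟩, α₂, β₂⟩ q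
      simp only at h1 h2
      have : J (α₁ q) = J (α₂ q) := by rw [← h1, ← h2, h]
      exact congrArg Fin.val (hJ.injective this)
    have hβ : β₁ = β₂ := by
      ext r
      have h1 := hΦr ⟨⟨I₁, hI₁⟩, α₁, β₁⟩ r
      have h2 := hΦr ⟨⟨I₁, hI₂⟩, α₂, β₂⟩ r
      simp only at h1 h2
      have : J' (β₁ r) = J' (β₂ r) := by rw [← h1, ← h2, h]
      rw [hJ'] at this
      exact congrArg Fin.val ((delTuple_strictMono hJ.injective).injective this)
    simp [hα, hβ]
  have hbij : Function.Bijective Φ := by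
    refine (Fintype.bijective_iff_injective_and_card Φ).2 ⟨hinj, ?_⟩
    rw [Fintype.card_prod, Fintype.card_prod, card_strictMono, Fintype.card_perm,
      Fintype.card_perm, Fintype.card_perm, Fintype.card_fin, Fintype.card_fin, Fintype.card_fin]
    rw [← mul_assoc]
    exact Nat.choose_mul_factorial_mul_factorial hmn
  have key : ∀ t, (∏ i, B i (Φ t i)) =
      (∏ r, B (delTuple t.1.1 t.1.2.injective r) (J' (t.2.2 r))) *
        (∏ q, B (t.1.1 q) (J (t.2.1 q))) := by
    intro t
    rw [← Equiv.prod_comp (sumEquiv hmn t.1.2.injective) (fun i => B i (Φ t i))]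
    rw [Fintype.prod_sum_type]
    simp only [sumEquiv_inl, sumEquiv_inr, hΦl, hΦr]
    ring
  calc perm B = ∑ π : Equiv.Perm (Fin n), ∏ i, B i (π i) := rfl
    _ = ∑ t, ∏ i, B i (Φ t i) := (Fintype.sum_bijective Φ hbij _ _ (fun t => rfl)).symm
    _ = ∑ t : {I : Fin m → Fin n // StrictMono I} × Equiv.Perm (Fin m) × Equiv.Perm (Fin (n - m)),
          (∏ r, B (delTuple t.1.1 t.1.2.injective r) (J' (t.2.2 r))) *
            (∏ q, B (t.1.1 q) (J (t.2.1 q))) := by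
        exact Finset.sum_congr rfl fun t _ => key t
    _ = ∑ I : {I : Fin m → Fin n // StrictMono I},
          perm (B.submatrix (delTuple I.1 I.2.injective) (delTuple J hJ.injective)) *
            perm (B.submatrix I.1 J) := by
        rw [Fintype.sum_prod_type]
        refine Finset.sum_congr rfl fun I _ => ?_
        rw [perm_submatrix, perm_submatrix, Finset.sum_mul_sum, Fintype.sum_prod_type,
          Finset.sum_comm]

end PermAux

namespace PermAux

/-- The permanent as a continuous multilinear map in the columns. -/
def permCML (n : ℕ) : ContinuousMultilinearMap ℂ (fun _ : Fin n => (Fin n → ℂ)) ℂ :=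
  ∑ σ : Equiv.Perm (Fin n),
    (ContinuousMultilinearMap.mkPiAlgebra ℂ (Fin n) ℂ).compContinuousLinearMap
      (fun i => ContinuousLinearMap.proj (σ i))

lemma permCML_apply {n : ℕ} (v : Fin n → (Fin n → ℂ)) :
    permCML n v = ∑ σ : Equiv.Perm (Fin n), ∏ j, v j (σ j) := by
  simp [permCML]

/-- Transpose, as a continuous linear map to the pi type. -/
def transCLM (n : ℕ) : Matrix (Fin n) (Fin n) ℂ →L[ℂ] (Fin n → Fin n → ℂ) :=
  LinearMap.toContinuousLinearMap
    { toFun := fun B => fun j i => B i j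
      map_add' := fun B C => rfl
      map_smul' := fun c B => rfl }

@[simp] lemma transCLM_apply {n : ℕ} (B : Matrix (Fin n) (Fin n) ℂ) (j i : Fin n) :
    transCLM n B j i = B i j := rfl

lemma perm_eq_comp (n : ℕ) : (perm (k := n)) = ⇑(permCML n) ∘ ⇑(transCLM n) := by
  funext B
  simp only [Function.comp_apply, permCML_apply, transCLM_apply, perm]
  refine Fintype.sum_equiv (Equiv.inv (Equiv.Perm (Fin n))) _ _ fun σ => ?_
  rw [← Equiv.prod_comp σ (fun j => B ((Equiv.inv (Equiv.Perm (Fin n)) σ) j) j)]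
  simp

end PermAux

namespace PermAux

lemma replCols_apply_mem {n m : ℕ} (A : Matrix (Fin n) (Fin n) ℂ) {J : Fin m → Fin n}
    (hJ : Function.Injective J) (X : Fin m → Matrix (Fin n) (Fin n) ℂ) (p : Fin m) (i : Fin n) :
    replCols A J X i (J p) = X p i (J p) := by
  have h : ∃ q, J q = J p := ⟨p, rfl⟩
  simp only [replCols, Matrix.of_apply, dif_pos h]
  rw [hJ h.choose_spec]

lemma replCols_apply_not_mem {n m : ℕ} (A : Matrix (Fin n) (Fin n) ℂ) (J : Fin m → Fin n)
    (X : Fin m → Matrix (Fin n) (Fin n) ℂ) (i j : Fin n) (h : ¬∃ p, J p = j) :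
    replCols A J X i j = A i j := by
  simp only [replCols, Matrix.of_apply, dif_neg h]

lemma iteratedFDeriv_perm_eq (n m : ℕ) (A : Matrix (Fin n) (Fin n) ℂ)
    (X : Fin m → Matrix (Fin n) (Fin n) ℂ) :
    iteratedFDeriv ℂ m perm A X = ∑ e : Fin m ↪ Fin n, perm (replCols A ⇑e X) := by
  rw [perm_eq_comp n]
  rw [ContinuousLinearMap.iteratedFDeriv_comp_right (transCLM n) ((permCML n).contDiff) A
    (le_top : (m : WithTop ℕ∞) ≤ ⊤)]
  rw [ContinuousMultilinearMap.compContinuousLinearMap_apply]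
  rw [(permCML n).iteratedFDeriv_eq]
  simp only [ContinuousMultilinearMap.iteratedFDeriv, ContinuousMultilinearMap.sum_apply,
    ContinuousMultilinearMap.iteratedFDerivComponent_apply, Pi.compRightL_apply]
  refine Finset.sum_congr rfl fun e _ => ?_
  simp only [Function.comp_apply]
  congr 1
  funext j
  by_cases h : j ∈ Set.range ⇑e
  · rw [dif_pos h]
    obtain ⟨p, rfl⟩ := h
    funext i
    simp only [transCLM_apply]
    rw [replCols_apply_mem A e.injective X p i]
    congr 2
    apply e.injective
    have := congrArg Subtype.val (Equiv.apply_symm_apply e.toEquivRange ⟨e p, Set.mem_range_self p⟩)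
    simpa [Function.Embedding.toEquivRange] using this
  · rw [dif_neg h]
    funext i
    simp only [transCLM_apply]
    rw [replCols_apply_not_mem A ⇑e X i j (by simpa [Set.mem_range] using h)]

end PermAux

namespace PermAux

variable {n m : ℕ}

lemma replCols_comp (A : Matrix (Fin n) (Fin n) ℂ) {J : Fin m → Fin n}
    (hJ : Function.Injective J) (σ : Equiv.Perm (Fin m))
    (X : Fin m → Matrix (Fin n) (Fin n) ℂ) :
    replCols A (J ∘ ⇑σ⁻¹) X = replCols A J (fun p => X (σ p)) := by
  funext i j
  by_cases h : ∃ p, J p = j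
  · obtain ⟨p₀, rfl⟩ := h
    have h1 : ∃ p, (J ∘ ⇑σ⁻¹) p = J p₀ := ⟨σ p₀, by simp⟩
    have h2 : ∃ p, J p = J p₀ := ⟨p₀, rfl⟩
    simp only [replCols, Matrix.of_apply, dif_pos h1, dif_pos h2]
    have e1 : σ⁻¹ h1.choose = p₀ := hJ h1.choose_spec
    have e2 : h2.choose = p₀ := hJ h2.choose_spec
    have e3 : h1.choose = σ p₀ := by
      have := congrArg σ e1
      simpa using this
    rw [e2, e3]
  · have h1 : ¬∃ p, (J ∘ ⇑σ⁻¹) p = j := fun ⟨p, hp⟩ => h ⟨σ⁻¹ p, hp⟩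
    simp only [replCols, Matrix.of_apply, dif_neg h1, dif_neg h]

lemma sum_emb_eq (F : (Fin m → Fin n) → ℂ) :
    ∑ e : Fin m ↪ Fin n, F ⇑e =
      ∑ σ : Equiv.Perm (Fin m), ∑ J : {J : Fin m → Fin n // StrictMono J},
        F (J.1 ∘ ⇑σ⁻¹) := by
  let Ψ : (Equiv.Perm (Fin m) × {J : Fin m → Fin n // StrictMono J}) → (Fin m ↪ Fin n) :=
    fun t => ⟨t.2.1 ∘ ⇑t.1⁻¹, t.2.2.injective.comp (Equiv.injective _)⟩
  have hinj : Function.Injective Ψ := by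
    rintro ⟨σ₁, J₁, hJ₁⟩ ⟨σ₂, J₂, hJ₂⟩ h
    have hfun : J₁ ∘ ⇑σ₁⁻¹ = J₂ ∘ ⇑σ₂⁻¹ := congrArg (fun e => e.toFun) h
    have hr : Set.range J₁ = Set.range J₂ := by
      rw [← Function.Surjective.range_comp (Equiv.surjective σ₁⁻¹) J₁, hfun,
        Function.Surjective.range_comp (Equiv.surjective σ₂⁻¹) J₂]
    have hJ : J₁ = J₂ := strictMono_eq_of_range_eq hJ₁ hJ₂ hr
    subst hJ
    have hσ : σ₁ = σ₂ := by
      have h5 : σ₁⁻¹ = σ₂⁻¹ :=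
        Equiv.ext fun p => hJ₁.injective (congrFun hfun p)
      exact inv_injective h5
    simp [hσ]
  have hbij : Function.Bijective Ψ := by
    refine (Fintype.bijective_iff_injective_and_card Ψ).2 ⟨hinj, ?_⟩
    rw [Fintype.card_prod, Fintype.card_perm, card_strictMono, Fintype.card_fin,
      Fintype.card_embedding_eq, Fintype.card_fin, Fintype.card_fin,
      Nat.descFactorial_eq_factorial_mul_choose]
  rw [← Fintype.sum_bijective Ψ hbij _ _ (fun t => rfl), Fintype.sum_prod_type]
  rfl

end PermAux

namespace PermAux

lemma submatrix_replCols_del (A : Matrix (Fin n) (Fin n) ℂ) {J : Fin m → Fin n}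
    (hJ : Function.Injective J) (Y : Fin m → Matrix (Fin n) (Fin n) ℂ)
    {I : Fin m → Fin n} (hI : Function.Injective I) :
    (replCols A J Y).submatrix (delTuple I hI) (delTuple J hJ) =
      A.submatrix (delTuple I hI) (delTuple J hJ) := by
  funext r r'
  simp only [Matrix.submatrix_apply]
  apply replCols_apply_not_mem
  rintro ⟨p, hp⟩
  have hmem : delTuple J hJ r' ∈ (Set.range J)ᶜ := by
    rw [← range_delTuple hJ]; exact Set.mem_range_self _
  exact hmem ⟨p, hp⟩

lemma submatrix_replCols_base (A : Matrix (Fin n) (Fin n) ℂ) (J : Fin m → Fin n)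
    (Y : Fin m → Matrix (Fin n) (Fin n) ℂ) (I : Fin m → Fin n) :
    (replCols A J Y).submatrix I J = (replCols 0 J Y).submatrix I J := by
  funext q p
  simp only [Matrix.submatrix_apply, replCols, Matrix.of_apply]
  have h : ∃ p', J p' = J p := ⟨p, rfl⟩
  rw [dif_pos h, dif_pos h]

end PermAux


/-- for `1 ≤ m ≤ n`,
`D^m per(A)(X¹,…,Xᵐ) = Σ_{σ ∈ S_m} Σ_{I,J ∈ Q_{m,n}} per A(I|J) ⬝ per Y^σ_{[J]}[I|J]`,
where `Y^σ_{[J]}` has `J p`-th column equal to the `J p`-th column of `X^{σ(p)}`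
and all remaining columns zero. -/
theorem iteratedFDeriv_perm_eq_sum_laplace (n m : ℕ) (hm : 1 ≤ m) (hmn : m ≤ n)
    (A : Matrix (Fin n) (Fin n) ℂ) (X : Fin m → Matrix (Fin n) (Fin n) ℂ) :
    iteratedFDeriv ℂ m perm A X =
      ∑ σ : Equiv.Perm (Fin m), ∑ I : {I : Fin m → Fin n // StrictMono I},
        ∑ J : {J : Fin m → Fin n // StrictMono J},
          perm (A.submatrix (delTuple I.1 I.2.injective) (delTuple J.1 J.2.injective)) *
            perm ((replCols 0 J.1 fun p => X (σ p)).submatrix I.1 J.1) := by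
  rw [PermAux.iteratedFDeriv_perm_eq n m A X,
    PermAux.sum_emb_eq (fun f => perm (replCols A f X))]
  refine Finset.sum_congr rfl fun σ _ => ?_
  have step : ∀ J : {J : Fin m → Fin n // StrictMono J},
      perm (replCols A (J.1 ∘ ⇑σ⁻¹) X) =
        ∑ I : {I : Fin m → Fin n // StrictMono I},
          perm (A.submatrix (delTuple I.1 I.2.injective) (delTuple J.1 J.2.injective)) *
            perm ((replCols 0 J.1 fun p => X (σ p)).submatrix I.1 J.1) := by
    intro J
    rw [PermAux.replCols_comp A J.2.injective σ X,
      PermAux.perm_eq_laplace hmn _ J.2]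
    refine Finset.sum_congr rfl fun I _ => ?_
    rw [PermAux.submatrix_replCols_del A J.2.injective _ I.2.injective,
      PermAux.submatrix_replCols_base A J.1 _ I.1]
  rw [Finset.sum_congr rfl fun J _ => step J, Finset.sum_comm]
end
end

section
/- Let A and X be n×n complex matrices and 1 ≤ m ≤ n. Then D^m per(A)(X,…,X) = m! · Σ_{I,J∈Q_{m,n}} per A(I|J) · per X[I|J]. -/
open scoped Classical

noncomputable section

open scoped Matrix.Norms.L2Operator

/-! Viewing `perm` as a multilinear function of the rows, its `m`-th derivative at `A` in the
direction `(X, …, X)` is the sum, over injections `e : Fin m ↪ Fin n`, of the permanent of `A` with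
the rows in the range of `e` replaced by those of `X`. Each term depends only on that range, whence
the factor `m!`, and the Laplace expansion `per M = Σ_J per M[I|J] · per M(I|J)` along the replaced
rows `I` gives the formula. The Laplace expansion holds because each permutation of `Fin n` splits
uniquely into a column set `J`, a bijection `I → J` and a bijection between the complements. -/

open Finset Function

section StrictMonoTuples

variable {α : Type*} [LinearOrder α] {m : ℕ}

lemma StrictMono.eq_and_eq_of_comp_perm_eq {I J : Fin m → α} (hI : StrictMono I)
    (hJ : StrictMono J) {ρ ρ' : Equiv.Perm (Fin m)} (h : I ∘ ρ = J ∘ ρ') : I = J ∧ ρ = ρ' := by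
  obtain rfl : I = J := (hI.range_inj hJ).1 <| by
    rw [← ρ.surjective.range_comp, h, ρ'.surjective.range_comp]
  exact ⟨rfl, Equiv.ext fun r => hI.injective (congrFun h r)⟩

lemma Function.Injective.exists_strictMono_comp_perm_eq {e : Fin m → α} (he : Injective e) :
    ∃ I : Fin m → α, StrictMono I ∧ ∃ ρ : Equiv.Perm (Fin m), I ∘ ρ = e :=
  ⟨e ∘ Tuple.sort e,
    (Tuple.monotone_sort e).strictMono_of_injective (he.comp (Tuple.sort e).injective),
    (Tuple.sort e)⁻¹, by ext; simp⟩

def strictMonoProdPermEquivEmbedding :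
    {I : Fin m → α // StrictMono I} × Equiv.Perm (Fin m) ≃ (Fin m ↪ α) :=
  Equiv.ofBijective (fun p => ⟨p.1.1 ∘ p.2, p.1.2.injective.comp p.2.injective⟩) <| by
    refine ⟨fun p q h => ?_, fun e => ?_⟩
    · obtain ⟨hI, hρ⟩ := p.1.2.eq_and_eq_of_comp_perm_eq q.1.2 (congrArg DFunLike.coe h)
      exact Prod.ext (Subtype.ext hI) hρ
    · obtain ⟨I, hI, ρ, hIρ⟩ := e.injective.exists_strictMono_comp_perm_eq
      exact ⟨(⟨I, hI⟩, ρ), DFunLike.coe_injective hIρ⟩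

lemma sum_embedding_range_eq_factorial_smul [Fintype α] {M : Type*} [AddCommMonoid M]
    (f : Set α → M) :
    ∑ e : Fin m ↪ α, f (Set.range e) =
      m.factorial • ∑ I : {I : Fin m → α // StrictMono I}, f (Set.range I.1) := by
  rw [← strictMonoProdPermEquivEmbedding.sum_comp, Fintype.sum_prod_type, smul_sum]
  refine sum_congr rfl fun I _ => ?_
  have hrange (ρ : Equiv.Perm (Fin m)) :
      Set.range (strictMonoProdPermEquivEmbedding (I, ρ)) = Set.range I.1 :=
    ρ.surjective.range_comp I.1
  simp only [hrange, sum_const, card_univ, Fintype.card_perm, Fintype.card_fin]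

end StrictMonoTuples

section ReplRows

variable {ι ι' κ κ' R : Type*}

def replRows (A X : Matrix ι ι' R) (s : Set ι) : Matrix ι ι' R :=
  Matrix.of fun i => if i ∈ s then X i else A i

lemma replRows_submatrix_of_forall_mem (A X : Matrix ι ι' R) {s : Set ι} {r : κ → ι}
    (hr : ∀ k, r k ∈ s) (c : κ' → ι') : (replRows A X s).submatrix r c = X.submatrix r c := by
  ext k l
  simp [replRows, hr k]

lemma replRows_submatrix_of_forall_notMem (A X : Matrix ι ι' R) {s : Set ι} {r : κ → ι}
    (hr : ∀ k, r k ∉ s) (c : κ' → ι') : (replRows A X s).submatrix r c = A.submatrix r c := by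
  ext k l
  simp [replRows, hr k]

end ReplRows

section Laplace

variable {n m : ℕ}

lemma delTuple_strictMono (I : Fin m → Fin n) (hI : Injective I) : StrictMono (delTuple I hI) :=
  (Finset.orderEmbOfFin _ _).strictMono

lemma range_delTuple (I : Fin m → Fin n) (hI : Injective I) :
    Set.range (delTuple I hI) = (Set.range I)ᶜ := by
  simp [delTuple, Finset.range_orderEmbOfFin]

lemma delTuple_notMem_range (I : Fin m → Fin n) (hI : Injective I) (k : Fin (n - m)) :
    delTuple I hI k ∉ Set.range I := by
  rw [← Set.mem_compl_iff, ← range_delTuple I hI]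
  exact Set.mem_range_self k

def sumDelTupleEquiv (I : Fin m → Fin n) (hI : Injective I) : Fin m ⊕ Fin (n - m) ≃ Fin n :=
  Equiv.ofBijective (Sum.elim I (delTuple I hI)) <| by
    have hmn : m ≤ n := by simpa using Fintype.card_le_of_injective I hI
    rw [Fintype.bijective_iff_injective_and_card]
    refine ⟨hI.sumElim (delTuple_strictMono I hI).injective fun a b h => ?_, by simp [hmn]⟩
    exact delTuple_notMem_range I hI b (h ▸ Set.mem_range_self a)

@[simp] lemma sumDelTupleEquiv_inl (I : Fin m → Fin n) (hI : Injective I) (r : Fin m) :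
    sumDelTupleEquiv I hI (.inl r) = I r := rfl

@[simp] lemma sumDelTupleEquiv_inr (I : Fin m → Fin n) (hI : Injective I) (k : Fin (n - m)) :
    sumDelTupleEquiv I hI (.inr k) = delTuple I hI k := rfl

@[simp] lemma sumDelTupleEquiv_symm_apply (I : Fin m → Fin n) (hI : Injective I) (r : Fin m) :
    (sumDelTupleEquiv I hI).symm (I r) = .inl r :=
  (Equiv.symm_apply_eq _).2 rfl

@[simp] lemma sumDelTupleEquiv_symm_apply_delTuple (I : Fin m → Fin n) (hI : Injective I)
    (k : Fin (n - m)) : (sumDelTupleEquiv I hI).symm (delTuple I hI k) = .inr k :=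
  (Equiv.symm_apply_eq _).2 rfl

def blockPerm {I : Fin m → Fin n} (hI : StrictMono I)
    (p : {J : Fin m → Fin n // StrictMono J} × Equiv.Perm (Fin m) × Equiv.Perm (Fin (n - m))) :
    Equiv.Perm (Fin n) :=
  (sumDelTupleEquiv I hI.injective).symm.trans
    ((Equiv.sumCongr p.2.1 p.2.2).trans (sumDelTupleEquiv p.1.1 p.1.2.injective))

lemma blockPerm_apply_left {I : Fin m → Fin n} (hI : StrictMono I) (p) (r : Fin m) :
    blockPerm hI p (I r) = p.1.1 (p.2.1 r) := by
  simp [blockPerm]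

lemma blockPerm_apply_delTuple {I : Fin m → Fin n} (hI : StrictMono I) (p) (k : Fin (n - m)) :
    blockPerm hI p (delTuple I hI.injective k) = delTuple p.1.1 p.1.2.injective (p.2.2 k) := by
  simp [blockPerm]

lemma blockPerm_injective {I : Fin m → Fin n} (hI : StrictMono I) : Injective (blockPerm hI) := by
  rintro ⟨J, ρ, τ⟩ ⟨J', ρ', τ'⟩ h
  obtain ⟨hJ, rfl⟩ : J.1 = J'.1 ∧ ρ = ρ' := J.2.eq_and_eq_of_comp_perm_eq J'.2 <| funext fun r => by
    simpa [blockPerm_apply_left] using DFunLike.congr_fun h (I r)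
  obtain rfl := Subtype.ext hJ
  have hτ : τ = τ' := Equiv.ext fun k => (delTuple_strictMono J.1 J.2.injective).injective <| by
    simpa [blockPerm_apply_delTuple] using DFunLike.congr_fun h (delTuple I hI.injective k)
  rw [hτ]

lemma blockPerm_surjective {I : Fin m → Fin n} (hI : StrictMono I) : Surjective (blockPerm hI) := by
  intro σ
  obtain ⟨J, hJ, ρ, hJρ⟩ := (σ.injective.comp hI.injective).exists_strictMono_comp_perm_eq
  set ψ := (sumDelTupleEquiv I hI.injective).trans (σ.trans (sumDelTupleEquiv J hJ.injective).symm)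
  have hψ : Set.MapsTo ψ (Set.range Sum.inl) (Set.range Sum.inl) := by
    rintro _ ⟨r, rfl⟩
    refine ⟨ρ r, ?_⟩
    simpa [ψ, Equiv.eq_symm_apply] using congrFun hJρ r
  obtain ⟨⟨ρ', τ⟩, hρτ⟩ := Equiv.Perm.mem_sumCongrHom_range_of_perm_mapsTo_inl hψ
  have hρτ' : Equiv.sumCongr ρ' τ = ψ := hρτ
  refine ⟨(⟨J, hJ⟩, ρ', τ), Equiv.ext fun i => ?_⟩
  simp [blockPerm, hρτ', ψ]

lemma prod_blockPerm {R : Type*} [CommMonoid R] {I : Fin m → Fin n} (hI : StrictMono I)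
    (M : Matrix (Fin n) (Fin n) R) (p) :
    ∏ i, M i (blockPerm hI p i) =
      (∏ r, M (I r) (p.1.1 (p.2.1 r))) *
        ∏ k, M (delTuple I hI.injective k) (delTuple p.1.1 p.1.2.injective (p.2.2 k)) := by
  rw [← (sumDelTupleEquiv I hI.injective).prod_comp, Fintype.prod_sum_type]
  simp [blockPerm_apply_left, blockPerm_apply_delTuple]

lemma perm_eq_sum_perm_submatrix_mul {I : Fin m → Fin n} (hI : StrictMono I)
    (M : Matrix (Fin n) (Fin n) ℂ) :
    perm M = ∑ J : {J : Fin m → Fin n // StrictMono J}, perm (M.submatrix I J) *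
      perm (M.submatrix (delTuple I hI.injective) (delTuple J.1 J.2.injective)) := by
  rw [perm, ← Fintype.sum_bijective (blockPerm hI)
    ⟨blockPerm_injective hI, blockPerm_surjective hI⟩ _ _ fun _ => rfl]
  simp only [prod_blockPerm, Fintype.sum_prod_type, perm, sum_mul_sum, Matrix.submatrix_apply]

end Laplace

section Derivative

variable {n : ℕ}

def permMultilinear (n : ℕ) : ContinuousMultilinearMap ℂ (fun _ : Fin n => Fin n → ℂ) ℂ :=
  ∑ σ : Equiv.Perm (Fin n),
    (ContinuousMultilinearMap.mkPiAlgebra ℂ (Fin n) ℂ).compContinuousLinearMap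
      fun i => ContinuousLinearMap.proj (σ i)

lemma permMultilinear_apply (v : Fin n → Fin n → ℂ) :
    permMultilinear n v = perm (Matrix.of v) := by
  simp [permMultilinear, perm]

/-- Matrices carry the L2 operator norm here, so they are identified with row tuples (carrying the
sup norm) through a continuous linear equivalence rather than by `rfl`. -/
def matrixCLEquivPi (n : ℕ) : Matrix (Fin n) (Fin n) ℂ ≃L[ℂ] (Fin n → Fin n → ℂ) :=
  (Matrix.ofLinearEquiv ℂ).symm.toContinuousLinearEquiv

lemma perm_eq_permMultilinear_comp :
    (perm : Matrix (Fin n) (Fin n) ℂ → ℂ) = permMultilinear n ∘ matrixCLEquivPi n := by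
  ext A
  simp [permMultilinear_apply, matrixCLEquivPi]

lemma iteratedFDeriv_perm_apply_eq_sum_embedding (m : ℕ) (A X : Matrix (Fin n) (Fin n) ℂ) :
    iteratedFDeriv ℂ m perm A (fun _ => X) =
      ∑ e : Fin m ↪ Fin n, perm (replRows A X (Set.range e)) := by
  have hcomp := (matrixCLEquivPi n : _ →L[ℂ] _).iteratedFDeriv_comp_right
    ((permMultilinear n).contDiff (n := ⊤)) A (le_top : (m : WithTop ℕ∞) ≤ ⊤)
  rw [ContinuousLinearEquiv.coe_coe, ← perm_eq_permMultilinear_comp] at hcomp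
  rw [hcomp, ContinuousMultilinearMap.compContinuousLinearMap_apply,
    ContinuousMultilinearMap.iteratedFDeriv_eq, ContinuousMultilinearMap.iteratedFDeriv,
    _root_.sum_apply]
  refine sum_congr rfl fun e _ => ?_
  rw [ContinuousMultilinearMap.iteratedFDerivComponent_apply, permMultilinear_apply]
  congr 1
  ext i j
  simp only [replRows, Matrix.of_apply]
  split_ifs <;> rfl

end Derivative

theorem iteratedFDeriv_perm_apply_const_eq_sum_laplace_general (n m : ℕ)
    (A X : Matrix (Fin n) (Fin n) ℂ) :
    iteratedFDeriv ℂ m perm A (fun _ => X) =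
      (m.factorial : ℂ) * ∑ I : {I : Fin m → Fin n // StrictMono I},
        ∑ J : {J : Fin m → Fin n // StrictMono J},
          perm (A.submatrix (delTuple I.1 I.2.injective) (delTuple J.1 J.2.injective)) *
            perm (X.submatrix I.1 J.1) := by
  rw [iteratedFDeriv_perm_apply_eq_sum_embedding,
    sum_embedding_range_eq_factorial_smul fun S => perm (replRows A X S), nsmul_eq_mul]
  congr 1
  refine sum_congr rfl fun I _ => ?_
  rw [perm_eq_sum_perm_submatrix_mul I.2]
  refine sum_congr rfl fun J _ => ?_
  rw [mul_comm, replRows_submatrix_of_forall_mem _ _ Set.mem_range_self,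
    replRows_submatrix_of_forall_notMem _ _ (delTuple_notMem_range I.1 I.2.injective)]

/-- for `1 ≤ m ≤ n`,
`D^m per(A)(X,…,X) = m! Σ_{I,J ∈ Q_{m,n}} per A(I|J) ⬝ per X[I|J]`. -/
theorem iteratedFDeriv_perm_apply_const_eq_sum_laplace (n m : ℕ) (hm : 1 ≤ m) (hmn : m ≤ n)
    (A X : Matrix (Fin n) (Fin n) ℂ) :
    iteratedFDeriv ℂ m perm A (fun _ => X) =
      (m.factorial : ℂ) * ∑ I : {I : Fin m → Fin n // StrictMono I},
        ∑ J : {J : Fin m → Fin n // StrictMono J},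
          perm (A.submatrix (delTuple I.1 I.2.injective) (delTuple J.1 J.2.injective)) *
            perm (X.submatrix I.1 J.1) :=
  iteratedFDeriv_perm_apply_const_eq_sum_laplace_general n m A X
end
end

section
/- For all n×n complex matrices A and X, |per(A + X) − per A| ≤ (‖A‖ + ‖X‖)^n − ‖A‖^n, where ‖·‖ denotes the operator norm of a matrix acting on ℂ^n with the Euclidean norm. -/
/-!
Let `s` be the indicator vector of the permutations inside `Fin n → Fin n`. Then
`⟨s, A^{⊗n} s⟩ = n! · per A` and `‖s‖² = n!`, so `|per(A + X) - per A| ≤ ‖(A + X)^{⊗n} - A^{⊗n}‖`.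
Expanding `(A + X)^{⊗n}` multilinearly, the difference is the sum of the `2^n - 1` tensor
products with at least one factor `X`; since `‖⊗ₖ Mₖ‖ ≤ ∏ₖ ‖Mₖ‖`, its norm is at most
`(‖A‖ + ‖X‖)^n - ‖A‖^n`.
-/

open scoped Classical

noncomputable section

open scoped Matrix.Norms.L2Operator

open Finset
open scoped Kronecker

lemma Fintype.prod_add_eq_sum_prod_piecewise {R ι : Type*} [CommSemiring R] [Fintype ι]
    [DecidableEq ι] (f g : ι → R) : ∏ i, (f i + g i) = ∑ s : Finset ι, ∏ i, s.piecewise f g i := by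
  simp only [prod_add, prod_piecewise, univ_inter, compl_eq_univ_sdiff]

namespace Matrix

variable {𝕜 : Type*} [RCLike 𝕜]

section L2OpNorm

variable {m n : Type*} [Fintype m] [Fintype n] [DecidableEq n]

lemma sum_norm_sq_mulVec_le (A : Matrix m n 𝕜) (x : n → 𝕜) :
    ∑ i, ‖(A *ᵥ x) i‖ ^ 2 ≤ ‖A‖ ^ 2 * ∑ j, ‖x j‖ ^ 2 := by
  have h := pow_le_pow_left₀ (norm_nonneg _) (A.l2_opNorm_mulVec (WithLp.toLp 2 x)) 2
  rwa [mul_pow, EuclideanSpace.norm_sq_eq, EuclideanSpace.norm_sq_eq] at h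

lemma l2_opNorm_le_of_sum_norm_sq_le (A : Matrix m n 𝕜) {c : ℝ} (hc : 0 ≤ c)
    (h : ∀ x : n → 𝕜, ∑ i, ‖(A *ᵥ x) i‖ ^ 2 ≤ c ^ 2 * ∑ j, ‖x j‖ ^ 2) : ‖A‖ ≤ c := by
  rw [l2_opNorm_def]
  refine ContinuousLinearMap.opNorm_le_bound _ hc fun x => ?_
  refine (sq_le_sq₀ (norm_nonneg _) (by positivity)).mp ?_
  rw [mul_pow, EuclideanSpace.norm_sq_eq, EuclideanSpace.norm_sq_eq]
  exact h x

lemma l2_opNorm_reindex_le {m' n' : Type*} [Fintype m'] [Fintype n'] [DecidableEq n']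
    (e₁ : m ≃ m') (e₂ : n ≃ n') (A : Matrix m n 𝕜) : ‖reindex e₁ e₂ A‖ ≤ ‖A‖ := by
  refine l2_opNorm_le_of_sum_norm_sq_le _ (norm_nonneg A) fun x => ?_
  simp only [reindex_apply, submatrix_mulVec_equiv, Equiv.symm_symm, Function.comp_apply]
  rw [Equiv.sum_comp e₁.symm (fun i => ‖(A *ᵥ (x ∘ e₂)) i‖ ^ 2),
    ← Equiv.sum_comp e₂ (fun j => ‖x j‖ ^ 2)]
  exact sum_norm_sq_mulVec_le A (x ∘ e₂)

@[simp]
lemma l2_opNorm_reindex {m' n' : Type*} [Fintype m'] [Fintype n'] [DecidableEq n']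
    (e₁ : m ≃ m') (e₂ : n ≃ n') (A : Matrix m n 𝕜) : ‖reindex e₁ e₂ A‖ = ‖A‖ :=
  (l2_opNorm_reindex_le e₁ e₂ A).antisymm <| by
    simpa using l2_opNorm_reindex_le e₁.symm e₂.symm (reindex e₁ e₂ A)

lemma l2_opNorm_kronecker_one_le {β : Type*} [Fintype β] [DecidableEq β] (B : Matrix m n 𝕜) :
    ‖B ⊗ₖ (1 : Matrix β β 𝕜)‖ ≤ ‖B‖ := by
  have hmulVec : ∀ x i h,
      ((B ⊗ₖ (1 : Matrix β β 𝕜)) *ᵥ x) (i, h) = (B *ᵥ fun j => x (j, h)) i := by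
    intro x i h
    simp [mulVec, dotProduct, Fintype.sum_prod_type, one_apply]
  refine l2_opNorm_le_of_sum_norm_sq_le _ (norm_nonneg B) fun x => ?_
  calc ∑ p, ‖((B ⊗ₖ (1 : Matrix β β 𝕜)) *ᵥ x) p‖ ^ 2
      = ∑ h, ∑ i, ‖(B *ᵥ fun j => x (j, h)) i‖ ^ 2 := by
        simp only [Fintype.sum_prod_type_right, hmulVec]
    _ ≤ ∑ h, ‖B‖ ^ 2 * ∑ j, ‖x (j, h)‖ ^ 2 :=
        sum_le_sum fun h _ => sum_norm_sq_mulVec_le B _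
    _ = ‖B‖ ^ 2 * ∑ p, ‖x p‖ ^ 2 := by rw [← mul_sum, Fintype.sum_prod_type_right]

lemma l2_opNorm_one_le : ‖(1 : Matrix n n 𝕜)‖ ≤ 1 :=
  l2_opNorm_le_of_sum_norm_sq_le _ zero_le_one fun x => by simp

lemma norm_sum_sum_le_mul_card (A : Matrix n n 𝕜) (s : Finset n) :
    ‖∑ i ∈ s, ∑ j ∈ s, A i j‖ ≤ ‖A‖ * #s := by
  set u : EuclideanSpace 𝕜 n := WithLp.toLp 2 fun i => if i ∈ s then 1 else 0
  have hinner :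
      inner 𝕜 u ((EuclideanSpace.equiv n 𝕜).symm (A *ᵥ u)) = ∑ i ∈ s, ∑ j ∈ s, A i j := by
    simp [u, EuclideanSpace.inner_toLp_toLp, dotProduct, mulVec, sum_ite_mem]
  have hu : ‖u‖ ^ 2 = #s := by
    simp [u, EuclideanSpace.norm_sq_eq, apply_ite (fun t : 𝕜 => ‖t‖ ^ 2)]
  calc ‖∑ i ∈ s, ∑ j ∈ s, A i j‖ ≤ ‖u‖ * (‖A‖ * ‖u‖) := by
        rw [← hinner]
        exact (norm_inner_le_norm _ _).trans <|
          mul_le_mul_of_nonneg_left (A.l2_opNorm_mulVec u) (norm_nonneg _)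
    _ = ‖A‖ * #s := by rw [← hu]; ring

lemma norm_sum_perm_sum_perm_le {ι : Type*} [Fintype ι] [DecidableEq ι]
    (T : Matrix (ι → ι) (ι → ι) 𝕜) :
    ‖∑ σ : Equiv.Perm ι, ∑ τ : Equiv.Perm ι, T σ τ‖ ≤ ‖T‖ * (Fintype.card ι).factorial := by
  simpa [Fintype.card_perm] using
    norm_sum_sum_le_mul_card T (univ.map ⟨fun σ : Equiv.Perm ι => ⇑σ, DFunLike.coe_injective⟩)

end L2OpNorm

section piKronecker

variable {R κ ι : Type*} [Fintype κ]

def piKronecker [CommMonoid R] (M : κ → Matrix ι ι R) : Matrix (κ → ι) (κ → ι) R :=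
  of fun f g => ∏ k, M k (f k) (g k)

@[simp]
lemma piKronecker_apply [CommMonoid R] (M : κ → Matrix ι ι R) (f g : κ → ι) :
    piKronecker M f g = ∏ k, M k (f k) (g k) := rfl

lemma piKronecker_one [CommSemiring R] [DecidableEq ι] :
    piKronecker (1 : κ → Matrix ι ι R) = 1 := by
  ext f g
  simp [one_apply, Fintype.prod_boole, funext_iff]

variable [DecidableEq κ]

lemma piKronecker_mul [CommSemiring R] [Fintype ι] (M N : κ → Matrix ι ι R) :
    piKronecker M * piKronecker N = piKronecker (M * N) := by
  ext f h
  simp only [mul_apply, piKronecker_apply, Pi.mul_apply, ← prod_mul_distrib]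
  rw [prod_univ_sum, Fintype.piFinset_univ]

lemma piKronecker_add [CommSemiring R] (M N : κ → Matrix ι ι R) :
    piKronecker (M + N) = ∑ s : Finset κ, piKronecker (s.piecewise M N) := by
  ext f g
  simp only [piKronecker_apply, Pi.add_apply, add_apply, sum_apply,
    Fintype.prod_add_eq_sum_prod_piecewise]
  exact sum_congr rfl fun s _ => prod_congr rfl fun k _ => by by_cases hk : k ∈ s <;> simp [hk]

lemma reindex_funSplitAt_piKronecker_mulSingle [CommSemiring R] [DecidableEq ι] (a : κ)
    (B : Matrix ι ι R) :
    reindex (Equiv.funSplitAt a ι) (Equiv.funSplitAt a ι) (piKronecker (Pi.mulSingle a B)) =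
      B ⊗ₖ 1 := by
  ext ⟨i, h⟩ ⟨j, h'⟩
  have hne : ∀ k : {k // k ≠ a}, (k : κ) ≠ a := fun k => k.2
  simp [Fintype.prod_eq_mul_prod_subtype_ne _ a, one_apply, hne, Fintype.prod_boole, ← funext_iff]

lemma l2_opNorm_piKronecker_mulSingle_le [DecidableEq ι] [Fintype ι] (a : κ)
    (B : Matrix ι ι 𝕜) :
    ‖piKronecker (Pi.mulSingle a B)‖ ≤ ‖B‖ := by
  rw [← l2_opNorm_reindex (Equiv.funSplitAt a ι) (Equiv.funSplitAt a ι),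
    reindex_funSplitAt_piKronecker_mulSingle]
  exact l2_opNorm_kronecker_one_le B

lemma l2_opNorm_piKronecker_le [DecidableEq ι] [Fintype ι] (M : κ → Matrix ι ι 𝕜) :
    ‖piKronecker M‖ ≤ ∏ k, ‖M k‖ := by
  suffices ∀ s : Finset κ, ‖piKronecker (s.piecewise M 1)‖ ≤ ∏ k ∈ s, ‖M k‖ by
    simpa using this univ
  intro s
  induction s using Finset.induction_on with
  | empty => simpa [piKronecker_one] using l2_opNorm_one_le
  | insert a s ha ih =>
    have hsplit : (insert a s).piecewise M 1 = Pi.mulSingle a (M a) * s.piecewise M 1 := by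
      ext1 k
      by_cases hk : k = a
      · subst hk; simp [ha]
      · simp [hk]
    rw [hsplit, ← piKronecker_mul, prod_insert ha]
    exact (l2_opNorm_mul _ _).trans <|
      mul_le_mul (l2_opNorm_piKronecker_mulSingle_le a (M a)) ih (norm_nonneg _) (norm_nonneg _)

lemma l2_opNorm_piKronecker_add_sub_le [DecidableEq ι] [Fintype ι] (M N : κ → Matrix ι ι 𝕜) :
    ‖piKronecker (M + N) - piKronecker M‖ ≤ ∏ k, (‖M k‖ + ‖N k‖) - ∏ k, ‖M k‖ := by
  rw [piKronecker_add, Fintype.prod_add_eq_sum_prod_piecewise,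
    ← sum_erase_add _ _ (mem_univ univ), ← sum_erase_add _ _ (mem_univ univ)]
  simp only [piecewise_univ, add_sub_cancel_right]
  refine (norm_sum_le _ _).trans <|
    sum_le_sum fun s _ => (l2_opNorm_piKronecker_le _).trans_eq ?_
  exact prod_congr rfl fun k _ => by by_cases hk : k ∈ s <;> simp [hk]

end piKronecker

end Matrix

open Matrix in
lemma sum_perm_sum_perm_piKronecker_const {k : ℕ} (A : Matrix (Fin k) (Fin k) ℂ) :
    ∑ σ : Equiv.Perm (Fin k), ∑ τ : Equiv.Perm (Fin k), piKronecker (fun _ => A) σ τ =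
      k.factorial * perm A := by
  have hrow (σ : Equiv.Perm (Fin k)) : ∑ τ : Equiv.Perm (Fin k), ∏ i, A (σ i) (τ i) = perm A :=
    calc ∑ τ : Equiv.Perm (Fin k), ∏ i, A (σ i) (τ i)
        = ∑ τ : Equiv.Perm (Fin k), ∏ j, A j ((τ * σ⁻¹) j) :=
          sum_congr rfl fun τ _ => by simpa using Equiv.prod_comp σ fun j => A j ((τ * σ⁻¹) j)
      _ = perm A := Equiv.sum_comp (Equiv.mulRight σ⁻¹) fun ρ => ∏ j, A j (ρ j)
  simp [hrow, Fintype.card_perm]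

/-- `|per(A + X) − per A| ≤ (‖A‖ + ‖X‖)^n − ‖A‖^n`, where `‖·‖` on matrices
is the operator norm induced by the Euclidean norm on `ℂⁿ`. -/
theorem perm_perturbation_bound (n : ℕ) (A X : Matrix (Fin n) (Fin n) ℂ) :
    ‖perm (A + X) - perm A‖ ≤ (‖A‖ + ‖X‖) ^ n - ‖A‖ ^ n := by
  let T := Matrix.piKronecker (fun _ : Fin n => A + X) - Matrix.piKronecker (fun _ => A)
  have hT : ∑ σ : Equiv.Perm (Fin n), ∑ τ : Equiv.Perm (Fin n), T σ τ =
      n.factorial * (perm (A + X) - perm A) := by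
    simp only [T, Matrix.sub_apply, sum_sub_distrib, sum_perm_sum_perm_piKronecker_const, mul_sub]
  have hT_norm : ‖T‖ ≤ (‖A‖ + ‖X‖) ^ n - ‖A‖ ^ n := by
    simpa [Pi.add_def] using
      Matrix.l2_opNorm_piKronecker_add_sub_le (fun _ : Fin n => A) fun _ => X
  have hfact : (0 : ℝ) < n.factorial := by positivity
  refine le_of_mul_le_mul_left ?_ hfact
  calc (n.factorial : ℝ) * ‖perm (A + X) - perm A‖
      = ‖∑ σ : Equiv.Perm (Fin n), ∑ τ : Equiv.Perm (Fin n), T σ τ‖ := by simp [hT]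
    _ ≤ ‖T‖ * n.factorial := by simpa using Matrix.norm_sum_perm_sum_perm_le T
    _ ≤ n.factorial * ((‖A‖ + ‖X‖) ^ n - ‖A‖ ^ n) := by rw [mul_comm]; gcongr
end
end
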